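/- arXiv:0912.4988 — 2 statements merged into one kernel-verified Lean document; each statement's English description precedes it below -/
import Mathlib

section
/- Let A ∈ ℝ^{n×N} and let W_1,…,W_N be subspaces of ℝ^M. Then every block coefficient vector c = (c_1,…,c_N) with ‖c‖_{2,0} ≤ k is the unique solution of problem (P1) with data Y = A·U(c) if and only if the pair (A,(W_j)_{j=1}^N) satisfies the fusion null space property of order k. -/
open scoped BigOperators
open Matrix

/-- Euclidean norm of a finite-dimensional real vector. -/
noncomputable def norm2 {ι : Type*} [Fintype ι] (v : ι → ℝ) : ℝ :=
  Real.sqrt (∑ i, v i ^ 2)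

/-- Mixed ℓ₂,₁ norm of a block coefficient vector. -/
noncomputable def l21 {N : ℕ} {m : Fin N → ℕ} (c : ∀ j, Fin (m j) → ℝ) : ℝ :=
  ∑ j, norm2 (c j)

open Classical in
/-- Mixed ℓ₂,₀ "norm": number of nonzero blocks. -/
noncomputable def l20 {N : ℕ} {m : Fin N → ℕ} (c : ∀ j, Fin (m j) → ℝ) : ℕ :=
  (Finset.univ.filter fun j => c j ≠ 0).card

/-- The matrix U(c) whose j-th row is (U_j c_j)ᵀ. -/
noncomputable def Ucmat {N M : ℕ} {m : Fin N → ℕ}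
    (U : ∀ j, Matrix (Fin M) (Fin (m j)) ℝ)
    (c : ∀ j, Fin (m j) → ℝ) : Matrix (Fin N) (Fin M) ℝ :=
  Matrix.of fun j i => (U j).mulVec (c j) i

/-! If `c` is supported on `T` and `c' = c + h`, the triangle inequality blockwise gives
`‖c'‖₂,₁ ≥ ‖c‖₂,₁ - ∑_{j ∈ T} ‖h_j‖ + ∑_{j ∉ T} ‖h_j‖`, so the null space property for the
support of `c` forces `‖c'‖₂,₁ > ‖c‖₂,₁`. Conversely, a kernel vector `h` and a set `S` give
the feasible pair `h|_S` and `h|_S - h = -h|_{Sᶜ}`; uniqueness for the `S`-sparse one is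
exactly the null space inequality `∑_{j ∈ S} ‖h_j‖ < ∑_{j ∉ S} ‖h_j‖`. -/

section Norm2

variable {ι : Type*} [Fintype ι]

lemma norm2_eq_norm (v : ι → ℝ) : norm2 v = ‖WithLp.toLp 2 v‖ := by
  simp [EuclideanSpace.norm_eq, norm2, sq_abs]

lemma norm2_zero : norm2 (0 : ι → ℝ) = 0 := by
  simp [norm2]

lemma norm2_neg (v : ι → ℝ) : norm2 (-v) = norm2 v := by
  simp [norm2]

lemma norm2_le_add_norm2_sub (u v : ι → ℝ) : norm2 u ≤ norm2 v + norm2 (v - u) := by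
  simpa only [norm2_eq_norm, WithLp.toLp_sub, norm_sub_rev] using
    norm_le_insert' (WithLp.toLp 2 u) (WithLp.toLp 2 v)

end Norm2

lemma Finset.sum_lt_half_sum_iff {α : Type*} [Fintype α] [DecidableEq α]
    (S : Finset α) (f : α → ℝ) :
    ∑ j ∈ S, f j < (1 / 2 : ℝ) * ∑ j, f j ↔ ∑ j ∈ S, f j < ∑ j ∈ Sᶜ, f j := by
  rw [← S.sum_add_sum_compl f]
  constructor <;> intro h <;> linarith

section BlockVectors

variable {N : ℕ} {m : Fin N → ℕ}

lemma l20_le_card_of_support_subset {c : ∀ j, Fin (m j) → ℝ} {S : Finset (Fin N)}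
    (hc : ∀ j ∉ S, c j = 0) : l20 c ≤ S.card := by
  classical
  refine Finset.card_le_card fun j hj => ?_
  by_contra hjS
  exact (Finset.mem_filter.mp hj).2 (hc j hjS)

lemma l21_eq_sum_of_support_subset {c : ∀ j, Fin (m j) → ℝ} {S : Finset (Fin N)}
    (hc : ∀ j ∉ S, c j = 0) : l21 c = ∑ j ∈ S, norm2 (c j) :=
  (Finset.sum_subset (Finset.subset_univ S) fun j _ hj => by rw [hc j hj, norm2_zero]).symm

lemma l21_add_sum_compl_le {c : ∀ j, Fin (m j) → ℝ} {T : Finset (Fin N)}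
    (hc : ∀ j ∉ T, c j = 0) (c' : ∀ j, Fin (m j) → ℝ) :
    l21 c + ∑ j ∈ Tᶜ, norm2 (c' j - c j) ≤ l21 c' + ∑ j ∈ T, norm2 (c' j - c j) := by
  have off_support : ∑ j ∈ Tᶜ, norm2 (c' j - c j) = ∑ j ∈ Tᶜ, norm2 (c' j) :=
    Finset.sum_congr rfl fun j hj => by rw [hc j (Finset.mem_compl.mp hj), sub_zero]
  have on_support : ∑ j ∈ T, norm2 (c j) ≤ ∑ j ∈ T, (norm2 (c' j) + norm2 (c' j - c j)) :=
    Finset.sum_le_sum fun j _ => norm2_le_add_norm2_sub (c j) (c' j)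
  rw [l21_eq_sum_of_support_subset hc, l21, ← T.sum_add_sum_compl, off_support]
  rw [Finset.sum_add_distrib] at on_support
  linarith

variable (K : AddSubgroup (∀ j, Fin (m j) → ℝ)) (k : ℕ)

/-- With `K` the kernel of `c ↦ A·U(c)`, the feasible set of (P1) for the data `A·U(c)` is
`c + K`. -/
def UniqueL21Recovery : Prop :=
  ∀ c, l20 c ≤ k → ∀ c', c' - c ∈ K → c' ≠ c → l21 c < l21 c'

def FusionNullSpaceProperty : Prop :=
  ∀ h, h ≠ 0 → h ∈ K → ∀ S : Finset (Fin N), S.card ≤ k →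
    ∑ j ∈ S, norm2 (h j) < (1 / 2 : ℝ) * ∑ j, norm2 (h j)

theorem uniqueL21Recovery_iff_fusionNullSpaceProperty :
    UniqueL21Recovery K k ↔ FusionNullSpaceProperty K k := by
  classical
  constructor
  · intro hrec h hne hK S hS
    set c := S.piecewise h 0
    have hc : ∀ j ∉ S, c j = 0 := fun j hj => S.piecewise_eq_of_notMem _ _ hj
    have hc' : ∀ j ∉ Sᶜ, (c - h) j = 0 := fun j hj => by
      simp [c, Finset.piecewise_eq_of_mem _ _ _ (Finset.notMem_compl.mp hj)]
    have hlt := hrec c ((l20_le_card_of_support_subset hc).trans hS) (c - h)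
      (by simpa using K.neg_mem hK) (by simpa using hne)
    rw [l21_eq_sum_of_support_subset hc, l21_eq_sum_of_support_subset hc'] at hlt
    rw [Finset.sum_lt_half_sum_iff]
    convert hlt using 2 with j hj j hj
    · simp [c, Finset.piecewise_eq_of_mem _ _ _ hj]
    · simp [c, Finset.piecewise_eq_of_notMem _ _ _ (Finset.mem_compl.mp hj), norm2_neg]
  · intro hnsp c hc c' hK hne
    set T := Finset.univ.filter fun j => c j ≠ 0
    have hcT : ∀ j ∉ T, c j = 0 := fun j hj => by simpa [T] using hj
    have hnsp' := hnsp (c' - c) (sub_ne_zero.mpr hne) hK T (by unfold l20 at hc; convert hc)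
    rw [Finset.sum_lt_half_sum_iff] at hnsp'
    simp only [Pi.sub_apply] at hnsp'
    linarith [l21_add_sum_compl_le hcT c']

end BlockVectors

noncomputable def fusionMeasurement {n N M : ℕ} {m : Fin N → ℕ}
    (A : Matrix (Fin n) (Fin N) ℝ) (U : ∀ j, Matrix (Fin M) (Fin (m j)) ℝ) :
    (∀ j, Fin (m j) → ℝ) →+ Matrix (Fin n) (Fin M) ℝ :=
  AddMonoidHom.mk' (fun c => A * Ucmat U c) fun c c' => by
    rw [← Matrix.mul_add]
    congr 1
    ext j i
    simp [Ucmat, Matrix.mulVec_add]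

@[simp]
lemma fusionMeasurement_apply {n N M : ℕ} {m : Fin N → ℕ} (A : Matrix (Fin n) (Fin N) ℝ)
    (U : ∀ j, Matrix (Fin M) (Fin (m j)) ℝ) (c : ∀ j, Fin (m j) → ℝ) :
    fusionMeasurement A U c = A * Ucmat U c :=
  rfl

theorem stmt0_general {n N M : ℕ} {m : Fin N → ℕ} (k : ℕ)
    (A : Matrix (Fin n) (Fin N) ℝ)
    (U : ∀ j, Matrix (Fin M) (Fin (m j)) ℝ) :
    (∀ c : (∀ j, Fin (m j) → ℝ), l20 c ≤ k →
      ∀ c' : (∀ j, Fin (m j) → ℝ),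
        A * Ucmat U c' = A * Ucmat U c → c' ≠ c → l21 c < l21 c')
    ↔
    (∀ h : (∀ j, Fin (m j) → ℝ), h ≠ 0 → A * Ucmat U h = 0 →
      ∀ S : Finset (Fin N), S.card ≤ k →
        ∑ j ∈ S, norm2 (h j) < (1 / 2 : ℝ) * ∑ j, norm2 (h j)) := by
  simpa only [UniqueL21Recovery, FusionNullSpaceProperty, AddMonoidHom.mem_ker, map_sub,
    sub_eq_zero, fusionMeasurement_apply] using
    uniqueL21Recovery_iff_fusionNullSpaceProperty (fusionMeasurement A U).ker k

/-- Every k-block-sparse c is the unique (P1) solution with data Y = A·U(c)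
iff (A,(W_j)) satisfies the fusion null space property of order k. -/
theorem stmt0 {n N M : ℕ} {m : Fin N → ℕ} (k : ℕ)
    (A : Matrix (Fin n) (Fin N) ℝ)
    (U : ∀ j, Matrix (Fin M) (Fin (m j)) ℝ)
    (hU : ∀ j, (U j)ᵀ * U j = 1) :
    (∀ c : (∀ j, Fin (m j) → ℝ), l20 c ≤ k →
      ∀ c' : (∀ j, Fin (m j) → ℝ),
        A * Ucmat U c' = A * Ucmat U c → c' ≠ c → l21 c < l21 c')
    ↔
    (∀ h : (∀ j, Fin (m j) → ℝ), h ≠ 0 → A * Ucmat U h = 0 →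
      ∀ S : Finset (Fin N), S.card ≤ k →
        ∑ j ∈ S, norm2 (h j) < (1 / 2 : ℝ) * ∑ j, norm2 (h j)) :=
  stmt0_general k A U
end

section
/- Let A ∈ ℝ^{n×N}, let W_1,…,W_N be subspaces of ℝ^M, and let c = (c_1,…,c_N) be a block coefficient vector with support S = {j : c_j ≠ 0}. Suppose the submatrix A_S ∈ ℝ^{n×|S|} of A with columns indexed by S is injective, and suppose there exists a matrix H ∈ ℝ^{n×M} such that A_S^T H = sgn(U(c)_S) and ‖H^T A_{·,j}‖_2 < 1 for all j ∉ S. Then c is the unique solution of problem (P1) with data Y = A·U(c): every block vector c' ≠ c with A·U(c') = Y satisfies ‖c‖_{2,1} < ‖c'‖_{2,1}. -/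
/-!
Put `G := Aᵀ H`, whose `j`-th row is `Hᵀ A_{·,j}`. Pairing `G` row by row with `U(c')` gives the
Frobenius product `⟨H, A U(c')⟩`, which depends on `c'` only through `A U(c')`; hence it equals the
pairing with `U(c)`, which is `‖c‖_{2,1}` because the rows of `G` on `S` are the normalized rows of
`U(c)`. By Cauchy–Schwarz each row pairing with `U(c')` is at most `‖c'_j‖`, strictly so for `j ∉ S`
with `c'_j ≠ 0`, and such a `j` exists when `c' ≠ c` since `A_S` is injective.
-/

open scoped BigOperators
open Matrix

section norm2

variable {ι : Type*} [Fintype ι]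

lemma norm2_nonneg (v : ι → ℝ) : 0 ≤ norm2 v :=
  Real.sqrt_nonneg _

lemma norm2_eq_zero_iff {v : ι → ℝ} : norm2 v = 0 ↔ v = 0 := by
  rw [norm2, Real.sqrt_eq_zero (Finset.sum_nonneg fun i _ => sq_nonneg (v i)),
    Finset.sum_eq_zero_iff_of_nonneg fun i _ => sq_nonneg (v i)]
  simp [funext_iff]

lemma norm2_pos {v : ι → ℝ} (hv : v ≠ 0) : 0 < norm2 v :=
  (norm2_nonneg v).lt_of_ne' (norm2_eq_zero_iff.not.mpr hv)

lemma norm2_eq_sqrt_dotProduct (v : ι → ℝ) : norm2 v = Real.sqrt (v ⬝ᵥ v) := by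
  simp only [norm2, dotProduct, sq]

lemma sum_mul_le_norm2_mul_norm2 (u v : ι → ℝ) : ∑ i, u i * v i ≤ norm2 u * norm2 v :=
  Real.sum_mul_le_sqrt_mul_sqrt _ _ _

lemma sum_mul_le_norm2_of_norm2_le_one {g : ι → ℝ} (hg : norm2 g ≤ 1) (y : ι → ℝ) :
    ∑ i, g i * y i ≤ norm2 y :=
  (sum_mul_le_norm2_mul_norm2 g y).trans
    (mul_le_of_le_one_left (norm2_nonneg y) hg)

lemma sum_mul_lt_norm2_of_norm2_lt_one {g y : ι → ℝ} (hg : norm2 g < 1) (hy : y ≠ 0) :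
    ∑ i, g i * y i < norm2 y :=
  (sum_mul_le_norm2_mul_norm2 g y).trans_lt (mul_lt_of_lt_one_left (norm2_pos hy) hg)

lemma sum_div_norm2_mul_self (x : ι → ℝ) : ∑ i, x i / norm2 x * x i = norm2 x := by
  have hsq : ∑ i, x i ^ 2 = norm2 x ^ 2 :=
    (Real.sq_sqrt (Finset.sum_nonneg fun i _ => sq_nonneg (x i))).symm
  simp_rw [div_mul_eq_mul_div, ← sq, ← Finset.sum_div, hsq]
  rcases (norm2_nonneg x).eq_or_lt with h | h
  · simp [← h]
  · field_simp

lemma sum_div_norm2_mul_le (x y : ι → ℝ) : ∑ i, x i / norm2 x * y i ≤ norm2 y := by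
  rcases (norm2_nonneg x).eq_or_lt with h | h
  · simpa [← h] using norm2_nonneg y
  · simp_rw [div_mul_eq_mul_div, ← Finset.sum_div]
    rw [div_le_iff₀ h, mul_comm (norm2 y)]
    exact sum_mul_le_norm2_mul_norm2 x y

end norm2

section isometry

variable {ι κ : Type*} [Fintype ι] [Fintype κ] [DecidableEq κ]
  {U : Matrix ι κ ℝ}

lemma norm2_mulVec_of_transpose_mul_self (hU : Uᵀ * U = 1) (v : κ → ℝ) :
    norm2 (U *ᵥ v) = norm2 v := by
  rw [norm2_eq_sqrt_dotProduct, norm2_eq_sqrt_dotProduct, dotProduct_mulVec,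
    ← mulVec_transpose, mulVec_mulVec, hU, one_mulVec]

lemma mulVec_injective_of_transpose_mul_self (hU : Uᵀ * U = 1) :
    Function.Injective U.mulVec := fun v w h => by
  simpa only [mulVec_mulVec, hU, one_mulVec] using congrArg (Uᵀ *ᵥ ·) h

end isometry

section Ucmat

variable {N M : ℕ} {m : Fin N → ℕ} {U : ∀ j, Matrix (Fin M) (Fin (m j)) ℝ}

@[simp]
lemma Ucmat_row (c : ∀ j, Fin (m j) → ℝ) (j : Fin N) : Ucmat U c j = U j *ᵥ c j :=
  rfl

lemma norm2_Ucmat_row (hU : ∀ j, (U j)ᵀ * U j = 1) (c : ∀ j, Fin (m j) → ℝ) (j : Fin N) :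
    norm2 (Ucmat U c j) = norm2 (c j) :=
  norm2_mulVec_of_transpose_mul_self (hU j) (c j)

lemma Ucmat_row_eq_zero_iff (hU : ∀ j, (U j)ᵀ * U j = 1) {c : ∀ j, Fin (m j) → ℝ} {j : Fin N} :
    Ucmat U c j = 0 ↔ c j = 0 := by
  rw [Ucmat_row, ← (mulVec_injective_of_transpose_mul_self (hU j)).eq_iff, mulVec_zero]

lemma Ucmat_injective (hU : ∀ j, (U j)ᵀ * U j = 1) : Function.Injective (Ucmat U) :=
  fun _ _ h => funext fun j =>
    mulVec_injective_of_transpose_mul_self (hU j) (funext fun i => congrFun (congrFun h j) i)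

end Ucmat

section matrix

variable {ι κ μ : Type*} [Fintype κ]

lemma sum_transpose_mul_mul_apply [Fintype ι] [Fintype μ]
    (A : Matrix ι κ ℝ) (H : Matrix ι μ ℝ) (X : Matrix κ μ ℝ) :
    ∑ j, ∑ i, (Aᵀ * H) j i * X j i = ∑ l, ∑ i, H l i * (A * X) l i := by
  calc ∑ j, ∑ i, (Aᵀ * H) j i * X j i = ∑ j, ∑ i, ∑ l, H l i * (A l j * X j i) := by
        simp only [mul_apply, transpose_apply, Finset.sum_mul]
        congr! 3 with j _ i _ l
        ring
    _ = ∑ i, ∑ l, ∑ j, H l i * (A l j * X j i) := by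
        rw [Finset.sum_comm]
        exact Finset.sum_congr rfl fun i _ => Finset.sum_comm
    _ = ∑ l, ∑ i, H l i * (A * X) l i := by
        simp only [mul_apply, Finset.mul_sum]
        exact Finset.sum_comm

lemma eq_of_mul_eq_of_rows_eq_zero {A : Matrix ι κ ℝ} {S : Finset κ}
    (hinj : ∀ u : κ → ℝ, (∀ j ∉ S, u j = 0) → A *ᵥ u = 0 → u = 0)
    {X Y : Matrix κ μ ℝ} (hX : ∀ j ∉ S, X j = 0) (hY : ∀ j ∉ S, Y j = 0)
    (hXY : A * X = A * Y) : X = Y := by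
  ext j i
  have hcol := hinj (fun j => X j i - Y j i) (fun j hj => by simp [hX j hj, hY j hj]) <| by
    ext l
    simpa [mulVec, dotProduct, mul_sub, mul_apply, sub_eq_zero] using congrFun (congrFun hXY l) i
  exact sub_eq_zero.mp (congrFun hcol j)

end matrix

lemma exists_not_mem_ne_zero_of_mul_Ucmat_eq {n N M : ℕ} {m : Fin N → ℕ}
    {U : ∀ j, Matrix (Fin M) (Fin (m j)) ℝ} (hU : ∀ j, (U j)ᵀ * U j = 1)
    {A : Matrix (Fin n) (Fin N) ℝ} {S : Finset (Fin N)}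
    (hinj : ∀ u : Fin N → ℝ, (∀ j ∉ S, u j = 0) → A *ᵥ u = 0 → u = 0)
    {c c' : ∀ j, Fin (m j) → ℝ} (hc : ∀ j ∉ S, c j = 0)
    (hA : A * Ucmat U c' = A * Ucmat U c) (hne : c' ≠ c) : ∃ j ∉ S, c' j ≠ 0 := by
  by_contra! hc'
  exact hne <| Ucmat_injective hU <| eq_of_mul_eq_of_rows_eq_zero hinj
    (fun j hj => (Ucmat_row_eq_zero_iff hU).mpr (hc' j hj))
    (fun j hj => (Ucmat_row_eq_zero_iff hU).mpr (hc j hj)) hA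

/-- Sufficient condition for unique (P1) recovery via a dual certificate H:
if A_S is injective, A_Sᵀ H = sgn(U(c)_S) and ‖Hᵀ a_j‖₂ < 1 for j ∉ S,
then c is the unique solution of (P1) with Y = A·U(c). -/
theorem stmt8 {n N M : ℕ} {m : Fin N → ℕ}
    (A : Matrix (Fin n) (Fin N) ℝ)
    (U : ∀ j, Matrix (Fin M) (Fin (m j)) ℝ)
    (hU : ∀ j, (U j)ᵀ * U j = 1)
    (c : ∀ j, Fin (m j) → ℝ)
    (S : Finset (Fin N)) (hS : ∀ j, j ∈ S ↔ c j ≠ 0)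
    (hinj : ∀ u : Fin N → ℝ, (∀ j ∉ S, u j = 0) → A.mulVec u = 0 → u = 0)
    (H : Matrix (Fin n) (Fin M) ℝ)
    (hH1 : ∀ j ∈ S, ∀ i : Fin M, (∑ l, A l j * H l i) =
      (U j).mulVec (c j) i / norm2 ((U j).mulVec (c j)))
    (hH2 : ∀ j ∉ S, norm2 (fun i : Fin M => ∑ l, H l i * A l j) < 1) :
    ∀ c' : (∀ j, Fin (m j) → ℝ),
      A * Ucmat U c' = A * Ucmat U c → c' ≠ c → l21 c < l21 c' := by
  intro c' hA hne
  set G := Aᵀ * H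
  have hG_apply : ∀ j i, G j i = ∑ l, A l j * H l i := fun j i => by
    simp only [G, mul_apply, transpose_apply]
  have hG_on : ∀ j ∈ S, G j = fun i => Ucmat U c j i / norm2 (Ucmat U c j) := fun j hj =>
    funext fun i => (hG_apply j i).trans (hH1 j hj i)
  have hG_off : ∀ j ∉ S, norm2 (G j) < 1 := fun j hj => by
    convert hH2 j hj using 2
    ext i
    simp only [hG_apply, mul_comm]
  have hc_off : ∀ j ∉ S, c j = 0 := fun j hj => not_not.mp ((hS j).not.mp hj)
  have hpair_c : ∀ j, ∑ i, G j i * Ucmat U c j i = norm2 (c j) := fun j => by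
    by_cases hj : j ∈ S
    · rw [hG_on j hj, sum_div_norm2_mul_self, norm2_Ucmat_row hU]
    · simp [hc_off j hj, norm2]
  have hpair_c' : ∀ j, ∑ i, G j i * Ucmat U c' j i ≤ norm2 (c' j) := fun j => by
    rw [← norm2_Ucmat_row hU c' j]
    by_cases hj : j ∈ S
    · rw [hG_on j hj]; exact sum_div_norm2_mul_le _ _
    · exact sum_mul_le_norm2_of_norm2_le_one (hG_off j hj).le _
  obtain ⟨j₀, hj₀S, hj₀⟩ := exists_not_mem_ne_zero_of_mul_Ucmat_eq hU hinj hc_off hA hne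
  have hstrict : ∑ i, G j₀ i * Ucmat U c' j₀ i < norm2 (c' j₀) := by
    rw [← norm2_Ucmat_row hU c' j₀]
    exact sum_mul_lt_norm2_of_norm2_lt_one (hG_off j₀ hj₀S) ((Ucmat_row_eq_zero_iff hU).not.mpr hj₀)
  calc l21 c = ∑ j, ∑ i, G j i * Ucmat U c j i := by simp only [l21, hpair_c]
    _ = ∑ j, ∑ i, G j i * Ucmat U c' j i := by
      rw [sum_transpose_mul_mul_apply, sum_transpose_mul_mul_apply, hA]
    _ < l21 c' := Finset.sum_lt_sum (fun j _ => hpair_c' j) ⟨j₀, Finset.mem_univ _, hstrict⟩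
end
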